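/- Define φ_n(f,g,h) = Σ_{𝐬 ∈ Sⁿ} Tr(ρ_𝐬(f)[F, ρ_𝐬(g)][F, ρ_𝐬(h)]M), where the sum is over all 4ⁿ level-n squares of the Cantor dust and ρ_𝐬(f) denotes evaluation of f at the four vertices of f_𝐬([0,1]²). Then for every continuous f on CD and Lipschitz g, h on CD, |φ_n(f,g,h)| ≤ 8·‖f‖_∞·Lip(g)·Lip(h)·(4/9)ⁿ. -/

import Mathlib

/-!
The vertices of every level-`n` square lie in the attractor `CD`: each corner of the unit square
is the fixed point of one of the contractions, and a fixed point of a contraction lies in every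
nonempty closed set the contraction maps into itself. Since a level-`n` square has side `3⁻ⁿ`,
the vertex differences of `g` and `h` are at most `Lip(g) 3⁻ⁿ` and `Lip(h) 3⁻ⁿ`. Expanding the
commutators with `F`, one square contributes `1/2` times four terms of the form
`f(vᵢ) (Δg Δh + Δg Δh)`, hence at most `4 ‖f‖_∞ Lip(g) Lip(h) 9⁻ⁿ`; summing over the `4ⁿ`
squares gives the bound.
-/

open Matrix

noncomputable def Fop : Matrix (Fin 4) (Fin 4) ℂ :=
  ((Real.sqrt 2 : ℝ) : ℂ)⁻¹ • !![0,0,1,1; 0,0,-1,1; 1,-1,0,0; 1,1,0,0]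

/-- Multiplication operator: diagonal of vertex values, ordered v₀, v₂, v₁, v₃. -/
def rho (f : Fin 4 → ℂ) : Matrix (Fin 4) (Fin 4) ℂ :=
  !![f 0, 0, 0, 0; 0, f 2, 0, 0; 0, 0, f 1, 0; 0, 0, 0, f 3]

def Mmat : Matrix (Fin 4) (Fin 4) ℂ :=
  !![0,1,0,0; -1,0,0,0; 0,0,0,1; 0,0,-1,0]

/-- The four similitudes of the Cantor-dust IFS. -/
noncomputable def ifsMap : Fin 4 → ℝ × ℝ → ℝ × ℝ
  | 0 => fun p => (p.1 / 3, p.2 / 3)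
  | 1 => fun p => (p.1 / 3, p.2 / 3 + 2/3)
  | 2 => fun p => (p.1 / 3 + 2/3, p.2 / 3)
  | 3 => fun p => (p.1 / 3 + 2/3, p.2 / 3 + 2/3)

/-- `f_𝐬 = f_{s₁} ∘ ⋯ ∘ f_{sₙ}`. -/
noncomputable def ifsComp {n : ℕ} (s : Fin n → Fin 4) : ℝ × ℝ → ℝ × ℝ :=
  (List.ofFn s).foldr (fun i g => ifsMap i ∘ g) id

/-- The corners of the unit square, numbered counterclockwise from the origin. -/
noncomputable def corner : Fin 4 → ℝ × ℝ := ![(0, 0), (1, 0), (1, 1), (0, 1)]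

/-- The `i`-th vertex of the level-`n` square indexed by `s`. -/
noncomputable def vert {n : ℕ} (s : Fin n → Fin 4) (i : Fin 4) : ℝ × ℝ :=
  ifsComp s (corner i)

/-- The approximating combinatorial integration. -/
noncomputable def phi (n : ℕ) (f g h : ℝ × ℝ → ℂ) : ℂ :=
  ∑ s : Fin n → Fin 4,
    (rho (f ∘ vert s) *
      (Fop * rho (g ∘ vert s) - rho (g ∘ vert s) * Fop) *
      (Fop * rho (h ∘ vert s) - rho (h ∘ vert s) * Fop) * Mmat).trace

open Set Function

lemma ifsMap_eq_smul_add (j : Fin 4) (p : ℝ × ℝ) :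
    ifsMap j p = (3⁻¹ : ℝ) • p + ifsMap j 0 := by
  fin_cases j <;> ext <;> simp [ifsMap] <;> ring

lemma dist_ifsMap (j : Fin 4) (p q : ℝ × ℝ) :
    dist (ifsMap j p) (ifsMap j q) = dist p q / 3 := by
  rw [ifsMap_eq_smul_add j p, ifsMap_eq_smul_add j q, dist_add_right, dist_smul₀]
  norm_num
  ring

lemma contractingWith_ifsMap (j : Fin 4) : ContractingWith 3⁻¹ (ifsMap j) :=
  ⟨by norm_num, LipschitzWith.of_dist_le_mul fun p q => by
    rw [dist_ifsMap]; norm_num; linarith⟩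

lemma ifsComp_succ {n : ℕ} (s : Fin (n + 1) → Fin 4) :
    ifsComp s = ifsMap (s 0) ∘ ifsComp (Fin.tail s) := by
  rw [ifsComp, ifsComp, List.ofFn_succ]
  rfl

lemma dist_ifsComp {n : ℕ} (s : Fin n → Fin 4) (p q : ℝ × ℝ) :
    dist (ifsComp s p) (ifsComp s q) = dist p q / 3 ^ n := by
  induction n with
  | zero => simp [ifsComp]
  | succ n ih =>
    rw [ifsComp_succ, Function.comp_apply, Function.comp_apply, dist_ifsMap, ih, pow_succ,
      div_div]

lemma dist_corner_le_one (i j : Fin 4) : dist (corner i) (corner j) ≤ 1 := by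
  fin_cases i <;> fin_cases j <;> norm_num [corner, Prod.dist_eq, Real.dist_eq]

lemma dist_vert_le {n : ℕ} (s : Fin n → Fin 4) (i j : Fin 4) :
    dist (vert s i) (vert s j) ≤ (1 / 3) ^ n := by
  rw [vert, vert, dist_ifsComp, _root_.one_div_pow]
  exact div_le_div_of_nonneg_right (dist_corner_le_one i j) (by positivity)

lemma ContractingWith.mem_of_isFixedPt {α : Type*} [MetricSpace α] [CompleteSpace α]
    {K : NNReal} {T : α → α} (hT : ContractingWith K T) {S : Set α} (hS : IsClosed S)
    (hne : S.Nonempty) (hST : MapsTo T S S) {c : α} (hc : IsFixedPt T c) : c ∈ S := by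
  obtain ⟨p, hp⟩ := hne
  have : Nonempty α := ⟨p⟩
  have hlim := hT.tendsto_iterate_fixedPoint p
  rw [← hT.fixedPoint_unique hc] at hlim
  exact hS.mem_of_tendsto hlim (Filter.Eventually.of_forall fun k => hST.iterate k hp)

section Attractor

variable {CD : Set (ℝ × ℝ)}

lemma mapsTo_ifsMap (hCDinv : CD = ⋃ i : Fin 4, ifsMap i '' CD) (j : Fin 4) :
    MapsTo (ifsMap j) CD CD := fun x hx => by
  rw [hCDinv]
  exact mem_iUnion.2 ⟨j, mem_image_of_mem _ hx⟩

lemma mapsTo_ifsComp (hCDinv : CD = ⋃ i : Fin 4, ifsMap i '' CD) {n : ℕ} (s : Fin n → Fin 4) :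
    MapsTo (ifsComp s) CD CD := by
  induction n with
  | zero => simpa [ifsComp] using mapsTo_id CD
  | succ n ih => rw [ifsComp_succ]; exact (mapsTo_ifsMap hCDinv _).comp (ih _)

lemma corner_mem (hCDne : CD.Nonempty) (hCDcomp : IsCompact CD)
    (hCDinv : CD = ⋃ i : Fin 4, ifsMap i '' CD) (i : Fin 4) : corner i ∈ CD := by
  have key (j : Fin 4) (hc : IsFixedPt (ifsMap j) (corner i)) : corner i ∈ CD :=
    (contractingWith_ifsMap j).mem_of_isFixedPt hCDcomp.isClosed hCDne
      (mapsTo_ifsMap hCDinv j) hc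
  fin_cases i
  · exact key 0 (by norm_num [IsFixedPt, ifsMap, corner])
  · exact key 2 (by norm_num [IsFixedPt, ifsMap, corner])
  · exact key 3 (by norm_num [IsFixedPt, ifsMap, corner])
  · exact key 1 (by norm_num [IsFixedPt, ifsMap, corner])

lemma vert_mem (hCDne : CD.Nonempty) (hCDcomp : IsCompact CD)
    (hCDinv : CD = ⋃ i : Fin 4, ifsMap i '' CD) {n : ℕ} (s : Fin n → Fin 4) (i : Fin 4) :
    vert s i ∈ CD :=
  mapsTo_ifsComp hCDinv s (corner_mem hCDne hCDcomp hCDinv i)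

end Attractor

noncomputable def squareTrace (d e k : Fin 4 → ℂ) : ℂ :=
  (rho d * (Fop * rho e - rho e * Fop) * (Fop * rho k - rho k * Fop) * Mmat).trace

lemma squareTrace_eq (d e k : Fin 4 → ℂ) :
    squareTrace d e k = 2⁻¹ *
      (d 0 * ((e 1 - e 0) * (k 2 - k 1) + (e 3 - e 0) * (k 3 - k 2)) +
       d 2 * ((e 2 - e 1) * (k 0 - k 1) + (e 3 - e 2) * (k 0 - k 3)) +
       d 1 * ((e 0 - e 1) * (k 0 - k 3) + (e 1 - e 2) * (k 2 - k 3)) +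
       d 3 * ((e 0 - e 3) * (k 1 - k 0) + (e 2 - e 3) * (k 2 - k 1))) := by
  have hsq : ((Real.sqrt 2 : ℝ) : ℂ)⁻¹ * ((Real.sqrt 2 : ℝ) : ℂ)⁻¹ = 2⁻¹ := by
    rw [← mul_inv, ← Complex.ofReal_mul, Real.mul_self_sqrt zero_le_two]
    norm_num
  simp only [squareTrace, Fop, smul_mul_assoc, mul_smul_comm, ← smul_sub, smul_smul, trace_smul,
    hsq, smul_eq_mul]
  congr 1
  simp [Matrix.trace, Fin.sum_univ_four, rho, Mmat]
  ring

lemma norm_squareTrace_le {d e k : Fin 4 → ℂ} {B u v : ℝ} (hd : ∀ i, ‖d i‖ ≤ B)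
    (he : ∀ i j, ‖e i - e j‖ ≤ u) (hk : ∀ i j, ‖k i - k j‖ ≤ v) :
    ‖squareTrace d e k‖ ≤ 4 * B * u * v := by
  have hB : 0 ≤ B := (norm_nonneg _).trans (hd 0)
  have hu : 0 ≤ u := (norm_nonneg _).trans (he 0 0)
  have hterm (i i₁ i₂ j₁ j₂ i₃ i₄ j₃ j₄ : Fin 4) :
      ‖d i * ((e i₁ - e i₂) * (k j₁ - k j₂) + (e i₃ - e i₄) * (k j₃ - k j₄))‖ ≤
        B * (u * v + u * v) := by
    rw [norm_mul]
    refine mul_le_mul (hd i) ((norm_add_le _ _).trans ?_) (norm_nonneg _) hB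
    rw [norm_mul, norm_mul]
    gcongr <;> first | exact he _ _ | exact hk _ _
  rw [squareTrace_eq, norm_mul, norm_inv, Complex.norm_ofNat]
  calc 2⁻¹ * ‖_ + _ + _ + _‖ ≤ 2⁻¹ * (4 * (B * (u * v + u * v))) := by
        gcongr
        refine norm_add₄_le.trans ?_
        linarith [hterm 0 1 0 2 1 3 0 3 2, hterm 2 2 1 0 1 3 2 0 3, hterm 1 0 1 0 3 1 2 2 3,
          hterm 3 0 3 1 0 2 3 2 1]
    _ = 4 * B * u * v := by ring

lemma phi_eq_sum_squareTrace (n : ℕ) (f g h : ℝ × ℝ → ℂ) :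
    phi n f g h = ∑ s : Fin n → Fin 4, squareTrace (f ∘ vert s) (g ∘ vert s) (h ∘ vert s) :=
  rfl

lemma LipschitzOnWith.norm_sub_comp_vert_le {CD : Set (ℝ × ℝ)} {g : ℝ × ℝ → ℂ} {K : NNReal}
    (hg : LipschitzOnWith K g CD) {n : ℕ} {s : Fin n → Fin 4} (hs : ∀ i, vert s i ∈ CD)
    (i j : Fin 4) : ‖(g ∘ vert s) i - (g ∘ vert s) j‖ ≤ K * (1 / 3) ^ n :=
  calc ‖g (vert s i) - g (vert s j)‖ = dist (g (vert s i)) (g (vert s j)) :=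
        (dist_eq_norm _ _).symm
    _ ≤ K * dist (vert s i) (vert s j) := hg.dist_le_mul _ (hs i) _ (hs j)
    _ ≤ K * (1 / 3) ^ n := by gcongr; exact dist_vert_le s i j

theorem stmt13_general (CD : Set (ℝ × ℝ)) (hCDne : CD.Nonempty) (hCDcomp : IsCompact CD)
    (hCDinv : CD = ⋃ i : Fin 4, ifsMap i '' CD)
    (f g h : ℝ × ℝ → ℂ)
    (B : ℝ) (hB : ∀ p ∈ CD, ‖f p‖ ≤ B)
    (Kg Kh : NNReal) (hg : LipschitzOnWith Kg g CD) (hh : LipschitzOnWith Kh h CD)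
    (n : ℕ) :
    ‖phi n f g h‖ ≤ 8 * B * Kg * Kh * (4/9 : ℝ) ^ n := by
  have hvert {m : ℕ} (s : Fin m → Fin 4) (i : Fin 4) : vert s i ∈ CD :=
    vert_mem hCDne hCDcomp hCDinv s i
  have hB0 : 0 ≤ B := (norm_nonneg _).trans (hB _ (hvert Fin.elim0 0))
  have hsquare (s : Fin n → Fin 4) :
      ‖squareTrace (f ∘ vert s) (g ∘ vert s) (h ∘ vert s)‖ ≤
        4 * B * (Kg * (1 / 3) ^ n) * (Kh * (1 / 3) ^ n) :=
    norm_squareTrace_le (fun i => hB _ (hvert s i)) (hg.norm_sub_comp_vert_le (hvert s))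
      (hh.norm_sub_comp_vert_le (hvert s))
  calc ‖phi n f g h‖ ≤ 4 ^ n * (4 * B * (Kg * (1 / 3) ^ n) * (Kh * (1 / 3) ^ n)) := by
        simpa [phi_eq_sum_squareTrace] using norm_sum_le_of_le Finset.univ fun s _ => hsquare s
    _ = 4 * B * Kg * Kh * (4 / 9) ^ n := by
        rw [show (4 / 9 : ℝ) = 4 * (1 / 3) * (1 / 3) by norm_num, mul_pow, mul_pow]
        ring
    _ ≤ 8 * B * Kg * Kh * (4 / 9) ^ n := by gcongr; norm_num

theorem stmt13 (CD : Set (ℝ × ℝ)) (hCDne : CD.Nonempty) (hCDcomp : IsCompact CD)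
    (hCDinv : CD = ⋃ i : Fin 4, ifsMap i '' CD)
    (f g h : ℝ × ℝ → ℂ) (hf : ContinuousOn f CD)
    (B : ℝ) (hB : ∀ p ∈ CD, ‖f p‖ ≤ B)
    (Kg Kh : NNReal) (hg : LipschitzOnWith Kg g CD) (hh : LipschitzOnWith Kh h CD)
    (n : ℕ) :
    ‖phi n f g h‖ ≤ 8 * B * Kg * Kh * (4/9 : ℝ) ^ n :=
  stmt13_general CD hCDne hCDcomp hCDinv f g h B hB Kg Kh hg hh n
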